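/- arXiv:1608.05736 — 6 statements merged into one kernel-verified Lean document; each statement's English description precedes it below -/
import Mathlib

section
/- Let k ∈ ℕ, let f_1, …, f_k : S → ℝ be continuous, and let φ(λ) = Π_{i=1}^k ⟨f_i, λ⟩. Then for every ξ ∈ S^E, L_VM(φ ∘ m)(ξ) = Σ_{A ⊆ {1,…,k}, |A| ≥ 2} φ_{A^c}(m(ξ)) · Σ_{x,y ∈ E} π(x)^{|A|} q(x,y) Δ^φ_A(ξ(y), ξ(x)), with the convention that a sum over an empty index set is zero. -/
open MeasureTheory Finset

/-- Empirical measure `m(ξ) = ∑_{x∈E} π(x) δ_{ξ(x)}`. -/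
noncomputable def empMeas {E S : Type*} [Fintype E] [MeasurableSpace S]
    (π : E → ℝ) (ξ : E → S) : Measure S :=
  ∑ x : E, (ENNReal.ofReal (π x)) • Measure.dirac (ξ x)

/-- Voting generator `L_VM F(ξ) = ∑_{x,y} q(x,y)[F(ξ^{x,y}) − F(ξ)]`. -/
noncomputable def LVM {E S : Type*} [Fintype E] [DecidableEq E]
    (q : E → E → ℝ) (F : (E → S) → ℝ) (ξ : E → S) : ℝ :=
  ∑ x : E, ∑ y : E, q x y * (F (Function.update ξ x (ξ y)) - F ξ)

lemma integral_empMeas {E S : Type*} [Fintype E] [MetricSpace S] [CompactSpace S]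
    [MeasurableSpace S] [BorelSpace S]
    (π : E → ℝ) (hπ : ∀ x, 0 ≤ π x) (g : C(S,ℝ)) (ξ : E → S) :
    ∫ σ, g σ ∂(empMeas π ξ) = ∑ x, π x * g (ξ x) := by
  rw [empMeas, integral_finset_sum_measure ?_]
  · refine Finset.sum_congr rfl fun x _ => ?_
    rw [integral_smul_measure, integral_dirac]
    simp [ENNReal.toReal_ofReal (hπ x)]
  · intro x _
    have h1 : Integrable (fun σ => g σ) (Measure.dirac (ξ x)) :=
      g.continuous.integrable_of_hasCompactSupport ((isClosed_tsupport _).isCompact)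
    exact h1.smul_measure ENNReal.ofReal_ne_top

/-- Proposition 2.1, voting part (eq. 2.6): for `φ(λ) = ∏_{i=1}^k ⟨f_i, λ⟩`,
`L_VM(φ∘m)(ξ) = ∑_{A ⊆ {1,…,k}, |A|≥2} φ_{Aᶜ}(m(ξ)) ∑_{x,y} π(x)^{|A|} q(x,y) Δ^φ_A(ξ(y),ξ(x))`. -/
theorem voter_generator_on_empirical_products
    {E S : Type*} [Fintype E] [DecidableEq E]
    [MetricSpace S] [CompactSpace S] [MeasurableSpace S] [BorelSpace S]
    (hE : 2 ≤ Fintype.card E)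
    (q : E → E → ℝ) (π : E → ℝ) (μ : Measure S) [IsFiniteMeasure μ]
    (hq0 : ∀ x y, 0 ≤ q x y) (hq1 : ∀ x, ∑ y, q x y = 1)
    (hqdiag : ∀ x, q x x = 0)
    (hirr : ∀ x y : E, ∃ n : ℕ, 0 < ((Matrix.of q) ^ n) x y)
    (hπpos : ∀ x, 0 < π x) (hπ1 : ∑ x, π x = 1)
    (hπstat : ∀ y, ∑ x, π x * q x y = π y)
    (k : ℕ) (f : Fin k → C(S, ℝ)) (ξ : E → S) :
    LVM q (fun ζ => ∏ i : Fin k, ∫ σ, f i σ ∂(empMeas π ζ)) ξ =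
      ∑ A ∈ Finset.univ.powerset.filter (fun A : Finset (Fin k) => 2 ≤ A.card),
        (∏ i ∈ Aᶜ, ∫ σ, f i σ ∂(empMeas π ξ)) *
          ∑ x : E, ∑ y : E, π x ^ A.card * q x y *
            ∏ i ∈ A, (f i (ξ y) - f i (ξ x)) := by
  have hπ0 : ∀ x, 0 ≤ π x := fun x => (hπpos x).le
  set a : Fin k → ℝ := fun i => ∫ σ, f i σ ∂(empMeas π ξ) with ha_def
  have ha : ∀ i, a i = ∑ z, π z * f i (ξ z) := fun i => integral_empMeas π hπ0 (f i) ξ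
  -- integral against updated configuration
  have hupd : ∀ (x y : E) (i : Fin k),
      ∫ σ, f i σ ∂(empMeas π (Function.update ξ x (ξ y)))
        = π x * (f i (ξ y) - f i (ξ x)) + a i := by
    intro x y i
    rw [integral_empMeas π hπ0 (f i), ha i]
    have hsum : ∑ z, π z * f i (Function.update ξ x (ξ y) z) - ∑ z, π z * f i (ξ z)
        = π x * (f i (ξ y) - f i (ξ x)) := by
      rw [← Finset.sum_sub_distrib, Finset.sum_eq_single x]
      · rw [Function.update_self]; ring
      · intro z _ hz; rw [Function.update_of_ne hz]; ring
      · intro h; exact absurd (Finset.mem_univ x) h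
    linarith
  -- the key expansion
  set P : Finset (Finset (Fin k)) := Finset.univ.powerset.erase ∅ with hP_def
  have key : ∀ x y : E,
      (∏ i : Fin k, ∫ σ, f i σ ∂(empMeas π (Function.update ξ x (ξ y))))
        - (∏ i : Fin k, ∫ σ, f i σ ∂(empMeas π ξ))
      = ∑ t ∈ P, π x ^ t.card * (∏ i ∈ t, (f i (ξ y) - f i (ξ x))) * ∏ i ∈ tᶜ, a i := by
    intro x y
    have h1 : (∏ i : Fin k, ∫ σ, f i σ ∂(empMeas π (Function.update ξ x (ξ y))))
        = ∑ t ∈ Finset.univ.powerset,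
            π x ^ t.card * (∏ i ∈ t, (f i (ξ y) - f i (ξ x))) * ∏ i ∈ tᶜ, a i := by
      rw [Finset.prod_congr rfl fun i _ => hupd x y i, Finset.prod_add]
      refine Finset.sum_congr rfl fun t _ => ?_
      rw [Finset.prod_mul_distrib, Finset.prod_const, ← Finset.compl_eq_univ_sdiff]
    have hmem : ∅ ∈ (Finset.univ.powerset : Finset (Finset (Fin k))) := by
      simp
    have haprod : (∏ i : Fin k, ∫ σ, f i σ ∂(empMeas π ξ)) = ∏ i : Fin k, a i := rfl
    rw [h1, ← Finset.add_sum_erase _ _ hmem, haprod]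
    have h0 : (π x ^ (∅ : Finset (Fin k)).card *
        (∏ i ∈ (∅ : Finset (Fin k)), (f i (ξ y) - f i (ξ x))) * ∏ i ∈ (∅ : Finset (Fin k))ᶜ, a i)
        = ∏ i : Fin k, a i := by
      simp
    rw [h0]
    ring
  -- singleton terms vanish
  have hzero : ∀ i : Fin k, ∑ x : E, ∑ y : E, π x * q x y * (f i (ξ y) - f i (ξ x)) = 0 := by
    intro i
    have h1 : ∑ x : E, ∑ y : E, π x * q x y * f i (ξ y) = ∑ y : E, π y * f i (ξ y) := by
      rw [Finset.sum_comm]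
      refine Finset.sum_congr rfl fun y _ => ?_
      rw [← Finset.sum_mul, hπstat y]
    have h2 : ∑ x : E, ∑ y : E, π x * q x y * f i (ξ x) = ∑ x : E, π x * f i (ξ x) := by
      refine Finset.sum_congr rfl fun x _ => ?_
      calc ∑ y : E, π x * q x y * f i (ξ x) = (π x * f i (ξ x)) * ∑ y : E, q x y := by
            rw [Finset.mul_sum]; exact Finset.sum_congr rfl fun y _ => by ring
        _ = π x * f i (ξ x) := by rw [hq1 x, mul_one]
    have : ∑ x : E, ∑ y : E, π x * q x y * (f i (ξ y) - f i (ξ x))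
        = (∑ x : E, ∑ y : E, π x * q x y * f i (ξ y))
          - ∑ x : E, ∑ y : E, π x * q x y * f i (ξ x) := by
      rw [← Finset.sum_sub_distrib]
      refine Finset.sum_congr rfl fun x _ => ?_
      rw [← Finset.sum_sub_distrib]
      exact Finset.sum_congr rfl fun y _ => by ring
    rw [this, h1, h2, sub_self]
  -- rewrite LVM as a sum over P
  have hLVM : LVM q (fun ζ => ∏ i : Fin k, ∫ σ, f i σ ∂(empMeas π ζ)) ξ
      = ∑ t ∈ P, (∏ i ∈ tᶜ, a i) *
          ∑ x : E, ∑ y : E, π x ^ t.card * q x y * ∏ i ∈ t, (f i (ξ y) - f i (ξ x)) := by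
    calc LVM q (fun ζ => ∏ i : Fin k, ∫ σ, f i σ ∂(empMeas π ζ)) ξ
        = ∑ x : E, ∑ y : E, ∑ t ∈ P,
            (∏ i ∈ tᶜ, a i) * (π x ^ t.card * q x y * ∏ i ∈ t, (f i (ξ y) - f i (ξ x))) := by
          rw [LVM]
          refine Finset.sum_congr rfl fun x _ => Finset.sum_congr rfl fun y _ => ?_
          rw [key x y, Finset.mul_sum]
          exact Finset.sum_congr rfl fun t _ => by ring
      _ = ∑ x : E, ∑ t ∈ P, ∑ y : E,
            (∏ i ∈ tᶜ, a i) * (π x ^ t.card * q x y * ∏ i ∈ t, (f i (ξ y) - f i (ξ x))) :=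
          Finset.sum_congr rfl fun x _ => Finset.sum_comm
      _ = ∑ t ∈ P, ∑ x : E, ∑ y : E,
            (∏ i ∈ tᶜ, a i) * (π x ^ t.card * q x y * ∏ i ∈ t, (f i (ξ y) - f i (ξ x))) :=
          Finset.sum_comm
      _ = _ := Finset.sum_congr rfl fun t _ => by
            rw [Finset.mul_sum]
            exact Finset.sum_congr rfl fun x _ => by rw [Finset.mul_sum]
  rw [hLVM, ← Finset.sum_filter_add_sum_filter_not P (fun t => t.card = 1)]
  have hsingle : ∑ t ∈ P.filter (fun t => t.card = 1), (∏ i ∈ tᶜ, a i) *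
      ∑ x : E, ∑ y : E, π x ^ t.card * q x y * ∏ i ∈ t, (f i (ξ y) - f i (ξ x)) = 0 := by
    refine Finset.sum_eq_zero fun t ht => ?_
    obtain ⟨_, hcard⟩ := Finset.mem_filter.mp ht
    obtain ⟨i, rfl⟩ := Finset.card_eq_one.mp hcard
    have : ∑ x : E, ∑ y : E, π x ^ ({i} : Finset (Fin k)).card * q x y *
        ∏ j ∈ ({i} : Finset (Fin k)), (f j (ξ y) - f j (ξ x))
        = ∑ x : E, ∑ y : E, π x * q x y * (f i (ξ y) - f i (ξ x)) := by
      refine Finset.sum_congr rfl fun x _ => Finset.sum_congr rfl fun y _ => ?_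
      simp
    rw [this, hzero i, mul_zero]
  rw [hsingle, zero_add]
  have hPfilter : P.filter (fun t => ¬ t.card = 1)
      = Finset.univ.powerset.filter (fun A : Finset (Fin k) => 2 ≤ A.card) := by
    ext t
    simp only [hP_def, Finset.mem_filter, Finset.mem_erase, Finset.mem_powerset]
    have h0 : t ≠ ∅ ↔ t.card ≠ 0 := by simp [Finset.card_eq_zero]
    constructor
    · rintro ⟨⟨hne, hsub⟩, h1⟩
      exact ⟨hsub, by have := h0.mp hne; omega⟩
    · rintro ⟨hsub, h2⟩
      exact ⟨⟨h0.mpr (by omega), hsub⟩, by omega⟩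
  rw [hPfilter]
end

section
/- Let f_1, f_2 : S → ℝ be continuous and φ(λ) = ⟨f_1, λ⟩⟨f_2, λ⟩. Then for every ξ ∈ S^E, L_μ(φ ∘ m)(ξ) = ⟨A_μ f_1, m(ξ)⟩⟨f_2, m(ξ)⟩ + ⟨f_1, m(ξ)⟩⟨A_μ f_2, m(ξ)⟩ + π_diag ⟨f_1 f_2, μ⟩ − ⟨f_1, μ⟩ Σ_{x∈E} π(x)² f_2(ξ(x)) − ⟨f_2, μ⟩ Σ_{x∈E} π(x)² f_1(ξ(x)) + μ(S) Σ_{x∈E} π(x)² f_1(ξ(x)) f_2(ξ(x)), where π_diag = Σ_{x∈E} π(x)². -/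
/-! Moving site `x` to type `σ` shifts `⟨f, m(ξ)⟩` by `π(x) (f σ - f (ξ x))`. The product of two
such functionals thus changes by `π(x)` times a term linear in the two shifts plus `π(x)²` times
their product. Integrating in `σ`, the linear part gives `A_μ f₁ (ξ x)` and `A_μ f₂ (ξ x)`, and
expanding the quadratic part gives the `π(x)²` corrections. -/

open MeasureTheory Finset

/-- Mutation generator `L_μ F(ξ) = ∑_{x∈E} ∫_S [F(ξ^{x|σ}) − F(ξ)] dμ(σ)`. -/
noncomputable def Lmu {E S : Type*} [Fintype E] [DecidableEq E] [MeasurableSpace S]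
    (μ : Measure S) (F : (E → S) → ℝ) (ξ : E → S) : ℝ :=
  ∑ x : E, ∫ σ, (F (Function.update ξ x σ) - F ξ) ∂μ

/-- Mutation operator `A_μ f(τ) = ∫_S [f(σ) − f(τ)] dμ(σ)`. -/
noncomputable def Amu {S : Type*} [MeasurableSpace S]
    (μ : Measure S) (f : S → ℝ) (τ : S) : ℝ :=
  ∫ σ, (f σ - f τ) ∂μ

namespace Mutation

section EmpiricalMeasure

variable {E S : Type*} [Fintype E] [MeasurableSpace S] [MeasurableSingletonClass S]
  {π : E → ℝ}

theorem integral_empMeas (hπ : ∀ x, 0 ≤ π x) (ξ : E → S) (f : S → ℝ) :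
    ∫ σ, f σ ∂(empMeas π ξ) = ∑ x, π x * f (ξ x) := by
  rw [empMeas, integral_finsetSum_measure fun x _ => (integrable_dirac enorm_lt_top).smul_measure
    ENNReal.ofReal_ne_top]
  simp [integral_smul_measure, ENNReal.toReal_ofReal (hπ _)]

theorem integral_empMeas_update [DecidableEq E] (hπ : ∀ x, 0 ≤ π x) (ξ : E → S) (x : E)
    (σ : S) (f : S → ℝ) :
    ∫ τ, f τ ∂(empMeas π (Function.update ξ x σ)) =
      ∫ τ, f τ ∂(empMeas π ξ) + π x * (f σ - f (ξ x)) := by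
  simp only [integral_empMeas hπ, Function.apply_update (fun y s => π y * f s),
    sum_update_of_mem (mem_univ x), sum_eq_add_sum_sdiff_singleton_of_mem (mem_univ x)]
  ring

end EmpiricalMeasure

theorem fun_sub_mul_sub_eq {S : Type*} (f g : S → ℝ) (a b : ℝ) :
    (fun σ => (f σ - a) * (g σ - b)) = fun σ => f σ * g σ - b * f σ - a * g σ + a * b := by
  funext σ; ring

section CenteredProduct

variable {S : Type*} [MeasurableSpace S] {μ : Measure S} [IsFiniteMeasure μ] {f g : S → ℝ}

theorem integrable_sub_mul_sub (hf : Integrable f μ) (hg : Integrable g μ)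
    (hfg : Integrable (fun σ => f σ * g σ) μ) (a b : ℝ) :
    Integrable (fun σ => (f σ - a) * (g σ - b)) μ := by
  rw [fun_sub_mul_sub_eq]
  exact ((hfg.sub (hf.const_mul b)).sub (hg.const_mul a)).add (integrable_const _)

theorem integral_sub_mul_sub (hf : Integrable f μ) (hg : Integrable g μ)
    (hfg : Integrable (fun σ => f σ * g σ) μ) (a b : ℝ) :
    ∫ σ, (f σ - a) * (g σ - b) ∂μ =
      ∫ σ, f σ * g σ ∂μ - b * ∫ σ, f σ ∂μ - a * ∫ σ, g σ ∂μ + μ.real Set.univ * (a * b) := by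
  rw [fun_sub_mul_sub_eq, integral_add (by fun_prop) (integrable_const _),
    integral_sub (by fun_prop) (by fun_prop), integral_sub hfg (by fun_prop), integral_const_mul,
    integral_const_mul, integral_const, smul_eq_mul]

end CenteredProduct

section SiteMutation

variable {E S : Type*} [Fintype E] [DecidableEq E] [MeasurableSpace S]
  [MeasurableSingletonClass S] {π : E → ℝ} {μ : Measure S} [IsFiniteMeasure μ] {f g : S → ℝ}

theorem integral_update_mul_sub (hπ : ∀ x, 0 ≤ π x) (hf : Integrable f μ) (hg : Integrable g μ)
    (hfg : Integrable (fun σ => f σ * g σ) μ) (ξ : E → S) (x : E) :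
    ∫ σ, ((∫ τ, f τ ∂(empMeas π (Function.update ξ x σ))) *
        (∫ τ, g τ ∂(empMeas π (Function.update ξ x σ))) -
        (∫ τ, f τ ∂(empMeas π ξ)) * (∫ τ, g τ ∂(empMeas π ξ))) ∂μ =
      π x * (Amu μ f (ξ x) * ∫ τ, g τ ∂(empMeas π ξ) + (∫ τ, f τ ∂(empMeas π ξ)) * Amu μ g (ξ x)) +
      π x ^ 2 * ∫ σ, (f σ - f (ξ x)) * (g σ - g (ξ x)) ∂μ := by
  simp only [integral_empMeas_update hπ]
  generalize ∫ τ, f τ ∂(empMeas π ξ) = a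
  generalize ∫ τ, g τ ∂(empMeas π ξ) = b
  have hexpand : (fun σ => (a + π x * (f σ - f (ξ x))) * (b + π x * (g σ - g (ξ x))) - a * b) =
      fun σ => π x * ((f σ - f (ξ x)) * b + a * (g σ - g (ξ x))) +
        π x ^ 2 * ((f σ - f (ξ x)) * (g σ - g (ξ x))) := by
    funext σ; ring
  have hf' : Integrable (fun σ => f σ - f (ξ x)) μ := hf.sub (integrable_const _)
  have hg' : Integrable (fun σ => g σ - g (ξ x)) μ := hg.sub (integrable_const _)
  have hfg' := integrable_sub_mul_sub hf hg hfg (f (ξ x)) (g (ξ x))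
  rw [hexpand, integral_add, integral_const_mul, integral_const_mul, integral_add,
    integral_mul_const, integral_const_mul, Amu, Amu]
  all_goals fun_prop

end SiteMutation

end Mutation

open Mutation in
theorem mutation_generator_on_second_moment_general
    {E S : Type*} [Fintype E] [DecidableEq E]
    [MetricSpace S] [CompactSpace S] [MeasurableSpace S] [BorelSpace S]
    (π : E → ℝ) (μ : Measure S) [IsFiniteMeasure μ]
    (hπpos : ∀ x, 0 < π x)
    (f₁ f₂ : C(S, ℝ)) (ξ : E → S) :
    Lmu μ (fun ζ => (∫ σ, f₁ σ ∂(empMeas π ζ)) * (∫ σ, f₂ σ ∂(empMeas π ζ))) ξ =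
      (∫ τ, Amu μ f₁ τ ∂(empMeas π ξ)) * (∫ σ, f₂ σ ∂(empMeas π ξ)) +
      (∫ σ, f₁ σ ∂(empMeas π ξ)) * (∫ τ, Amu μ f₂ τ ∂(empMeas π ξ)) +
      (∑ x : E, π x ^ 2) * (∫ σ, f₁ σ * f₂ σ ∂μ) -
      (∫ σ, f₁ σ ∂μ) * (∑ x : E, π x ^ 2 * f₂ (ξ x)) -
      (∫ σ, f₂ σ ∂μ) * (∑ x : E, π x ^ 2 * f₁ (ξ x)) +
      (μ Set.univ).toReal * (∑ x : E, π x ^ 2 * (f₁ (ξ x) * f₂ (ξ x))) := by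
  have hπ x : 0 ≤ π x := (hπpos x).le
  have hint (f : C(S, ℝ)) : Integrable f μ :=
    f.continuous.integrable_of_hasCompactSupport (.of_compactSpace f)
  have hf₁ := hint f₁
  have hf₂ := hint f₂
  have hf₁₂ := hint (f₁ * f₂)
  simp only [Lmu, integral_update_mul_sub hπ hf₁ hf₂ hf₁₂,
    integral_sub_mul_sub hf₁ hf₂ hf₁₂, integral_empMeas hπ ξ (Amu μ _)]
  generalize ∫ τ, f₁ τ ∂(empMeas π ξ) = a
  generalize ∫ τ, f₂ τ ∂(empMeas π ξ) = b
  simp only [mul_sum, sum_mul, ← sum_add_distrib, ← sum_sub_distrib]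
  exact sum_congr rfl fun x _ => by rw [Measure.real]; ring

/-- Corollary 2.2 (2), mutation part (eq. 2.16): for `φ(λ) = ⟨f₁,λ⟩⟨f₂,λ⟩`,
`L_μ(φ∘m)(ξ) = ⟨A_μ f₁,m(ξ)⟩⟨f₂,m(ξ)⟩ + ⟨f₁,m(ξ)⟩⟨A_μ f₂,m(ξ)⟩ + π_diag⟨f₁f₂,μ⟩
 − ⟨f₁,μ⟩ ∑_x π(x)² f₂(ξ(x)) − ⟨f₂,μ⟩ ∑_x π(x)² f₁(ξ(x)) + μ(S) ∑_x π(x)² f₁(ξ(x))f₂(ξ(x))`. -/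
theorem mutation_generator_on_second_moment
    {E S : Type*} [Fintype E] [DecidableEq E]
    [MetricSpace S] [CompactSpace S] [MeasurableSpace S] [BorelSpace S]
    (hE : 2 ≤ Fintype.card E)
    (π : E → ℝ) (μ : Measure S) [IsFiniteMeasure μ]
    (hπpos : ∀ x, 0 < π x) (hπ1 : ∑ x, π x = 1)
    (f₁ f₂ : C(S, ℝ)) (ξ : E → S) :
    Lmu μ (fun ζ => (∫ σ, f₁ σ ∂(empMeas π ζ)) * (∫ σ, f₂ σ ∂(empMeas π ζ))) ξ =
      (∫ τ, Amu μ f₁ τ ∂(empMeas π ξ)) * (∫ σ, f₂ σ ∂(empMeas π ξ)) +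
      (∫ σ, f₁ σ ∂(empMeas π ξ)) * (∫ τ, Amu μ f₂ τ ∂(empMeas π ξ)) +
      (∑ x : E, π x ^ 2) * (∫ σ, f₁ σ * f₂ σ ∂μ) -
      (∫ σ, f₁ σ ∂μ) * (∑ x : E, π x ^ 2 * f₂ (ξ x)) -
      (∫ σ, f₂ σ ∂μ) * (∑ x : E, π x ^ 2 * f₁ (ξ x)) +
      (μ Set.univ).toReal * (∑ x : E, π x ^ 2 * (f₁ (ξ x) * f₂ (ξ x))) :=
  mutation_generator_on_second_moment_general π μ hπpos f₁ f₂ ξ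
end

section
/- Let f : S × S → ℝ be bounded Borel measurable and F_f(ξ) = Σ_{x,y∈E} π(x)π(y) f(ξ(x), ξ(y)). Then for every ξ ∈ S^E, L_VM F_f(ξ) = Σ_{x,y∈E} π(x)² q(x,y) [f(ξ(y),ξ(y)) − f(ξ(x),ξ(x))] − Σ_{x,y∈E} π(x)² q(x,y) [f(ξ(y),ξ(x)) + f(ξ(x),ξ(y)) − 2 f(ξ(x),ξ(x))]. -/
open MeasureTheory Finset

/-- The test function `F_f(ξ) = ∑_{x,y∈E} π(x)π(y) f(ξ(x), ξ(y))`. -/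
noncomputable def Ftest {E S : Type*} [Fintype E]
    (π : E → ℝ) (f : S → S → ℝ) (ξ : E → S) : ℝ :=
  ∑ x : E, ∑ y : E, π x * π y * f (ξ x) (ξ y)

lemma cancel_sum {E : Type*} [Fintype E] (q : E → E → ℝ) (π h : E → ℝ)
    (hq1 : ∀ x, ∑ y, q x y = 1) (hπstat : ∀ y, ∑ x, π x * q x y = π y) :
    ∑ x : E, ∑ y : E, π x * q x y * (h y - h x) = 0 := by
  have h1 : ∑ x : E, ∑ y : E, π x * q x y * h y = ∑ x : E, π x * h x := by
    rw [Finset.sum_comm]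
    refine Finset.sum_congr rfl fun y _ => ?_
    calc ∑ x : E, π x * q x y * h y = (∑ x : E, π x * q x y) * h y := by
          rw [Finset.sum_mul]
      _ = π y * h y := by rw [hπstat]
  have h2 : ∑ x : E, ∑ y : E, π x * q x y * h x = ∑ x : E, π x * h x := by
    refine Finset.sum_congr rfl fun x _ => ?_
    calc ∑ y : E, π x * q x y * h x = (π x * h x) * ∑ y : E, q x y := by
          rw [Finset.mul_sum]; exact Finset.sum_congr rfl fun y _ => by ring
      _ = π x * h x := by rw [hq1]; ring
  simp only [mul_sub, Finset.sum_sub_distrib, h1, h2, sub_self]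

lemma delta_eq {E S : Type*} [Fintype E] [DecidableEq E]
    (π : E → ℝ) (f : S → S → ℝ) (ξ : E → S) (x y : E) :
    Ftest π f (Function.update ξ x (ξ y)) - Ftest π f ξ =
      π x * ((∑ b : E, π b * f (ξ y) (ξ b)) - (∑ b : E, π b * f (ξ x) (ξ b)))
      + π x * ((∑ a : E, π a * f (ξ a) (ξ y)) - (∑ a : E, π a * f (ξ a) (ξ x)))
      + π x ^ 2 * (f (ξ y) (ξ y) - f (ξ x) (ξ y) - f (ξ y) (ξ x) + f (ξ x) (ξ x)) := by
  set σ : E → S := Function.update ξ x (ξ y) with hσ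
  have hpt : ∀ a b : E, π a * π b * f (σ a) (σ b) =
      π a * π b * f (ξ a) (ξ b)
      + π a * π b * (if a = x then f (ξ y) (σ b) - f (ξ x) (σ b) else 0)
      + π a * π b * (if b = x then f (ξ a) (ξ y) - f (ξ a) (ξ x) else 0) := by
    intro a b
    rcases eq_or_ne a x with ha | ha <;> rcases eq_or_ne b x with hb | hb <;>
      simp [hσ, ha, hb, Function.update_apply] <;> ring
  have hmain : Ftest π f σ = Ftest π f ξ
      + (∑ a : E, ∑ b : E, π a * π b * (if a = x then f (ξ y) (σ b) - f (ξ x) (σ b) else 0))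
      + (∑ a : E, ∑ b : E, π a * π b * (if b = x then f (ξ a) (ξ y) - f (ξ a) (ξ x) else 0)) := by
    unfold Ftest
    rw [← Finset.sum_add_distrib, ← Finset.sum_add_distrib]
    refine Finset.sum_congr rfl fun a _ => ?_
    rw [← Finset.sum_add_distrib, ← Finset.sum_add_distrib]
    exact Finset.sum_congr rfl fun b _ => hpt a b
  have hT2 : (∑ a : E, ∑ b : E, π a * π b * (if b = x then f (ξ a) (ξ y) - f (ξ a) (ξ x) else 0))
      = π x * ((∑ a : E, π a * f (ξ a) (ξ y)) - (∑ a : E, π a * f (ξ a) (ξ x))) := by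
    have : ∀ a : E, (∑ b : E, π a * π b * (if b = x then f (ξ a) (ξ y) - f (ξ a) (ξ x) else 0))
        = π a * π x * (f (ξ a) (ξ y) - f (ξ a) (ξ x)) := by
      intro a
      rw [Finset.sum_eq_single x]
      · simp
      · intro b _ hb; simp [hb]
      · intro hx; exact absurd (Finset.mem_univ x) hx
    simp only [this]
    simp only [Finset.mul_sum, mul_sub, ← Finset.sum_sub_distrib]
    exact Finset.sum_congr rfl fun a _ => by ring
  have hT1 : (∑ a : E, ∑ b : E, π a * π b * (if a = x then f (ξ y) (σ b) - f (ξ x) (σ b) else 0))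
      = π x * ((∑ b : E, π b * f (ξ y) (ξ b)) - (∑ b : E, π b * f (ξ x) (ξ b)))
        + π x ^ 2 * (f (ξ y) (ξ y) - f (ξ x) (ξ y) - f (ξ y) (ξ x) + f (ξ x) (ξ x)) := by
    have step1 : (∑ a : E, ∑ b : E, π a * π b * (if a = x then f (ξ y) (σ b) - f (ξ x) (σ b) else 0))
        = ∑ b : E, π x * π b * (f (ξ y) (σ b) - f (ξ x) (σ b)) := by
      rw [Finset.sum_comm]
      refine Finset.sum_congr rfl fun b _ => ?_
      rw [Finset.sum_eq_single x]
      · simp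
      · intro a _ ha; simp [ha]
      · intro hx; exact absurd (Finset.mem_univ x) hx
    rw [step1]
    have hpt2 : ∀ b : E, π x * π b * (f (ξ y) (σ b) - f (ξ x) (σ b))
        = π x * π b * (f (ξ y) (ξ b) - f (ξ x) (ξ b))
          + π x * π b * (if b = x then
              (f (ξ y) (ξ y) - f (ξ x) (ξ y)) - (f (ξ y) (ξ x) - f (ξ x) (ξ x)) else 0) := by
      intro b
      rcases eq_or_ne b x with hb | hb <;>
        simp [hσ, hb, Function.update_apply] <;> ring
    simp only [hpt2]
    rw [Finset.sum_add_distrib]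
    congr 1
    · simp only [Finset.mul_sum, mul_sub, ← Finset.sum_sub_distrib]
      exact Finset.sum_congr rfl fun b _ => by ring
    · rw [Finset.sum_eq_single x]
      · simp; ring
      · intro b _ hb; simp [hb]
      · intro hx; exact absurd (Finset.mem_univ x) hx
  rw [hmain, hT1, hT2]; ring

/-- Proposition 2.3, voting part (eq. 2.18). -/
theorem voter_generator_on_Ff
    {E S : Type*} [Fintype E] [DecidableEq E]
    [MetricSpace S] [CompactSpace S] [MeasurableSpace S] [BorelSpace S]
    (hE : 2 ≤ Fintype.card E)
    (q : E → E → ℝ) (π : E → ℝ)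
    (hq0 : ∀ x y, 0 ≤ q x y) (hq1 : ∀ x, ∑ y, q x y = 1)
    (hqdiag : ∀ x, q x x = 0)
    (hirr : ∀ x y : E, ∃ n : ℕ, 0 < ((Matrix.of q) ^ n) x y)
    (hπpos : ∀ x, 0 < π x) (hπ1 : ∑ x, π x = 1)
    (hπstat : ∀ y, ∑ x, π x * q x y = π y)
    (f : S → S → ℝ)
    (hfmeas : Measurable (fun p : S × S => f p.1 p.2))
    (hfbdd : ∃ Cb : ℝ, ∀ σ τ : S, |f σ τ| ≤ Cb)
    (ξ : E → S) :
    LVM q (Ftest π f) ξ =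
      (∑ x : E, ∑ y : E, π x ^ 2 * q x y * (f (ξ y) (ξ y) - f (ξ x) (ξ x))) -
      (∑ x : E, ∑ y : E, π x ^ 2 * q x y *
        (f (ξ y) (ξ x) + f (ξ x) (ξ y) - 2 * f (ξ x) (ξ x))) := by
  set h : E → ℝ := fun a => ∑ b : E, π b * f (ξ a) (ξ b) with hh
  set k : E → ℝ := fun a => ∑ b : E, π b * f (ξ b) (ξ a) with hk
  have key : LVM q (Ftest π f) ξ =
      (∑ x : E, ∑ y : E, π x * q x y * (h y - h x))
      + (∑ x : E, ∑ y : E, π x * q x y * (k y - k x))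
      + (∑ x : E, ∑ y : E, π x ^ 2 * q x y *
          (f (ξ y) (ξ y) - f (ξ x) (ξ y) - f (ξ y) (ξ x) + f (ξ x) (ξ x))) := by
    unfold LVM
    rw [← Finset.sum_add_distrib, ← Finset.sum_add_distrib]
    refine Finset.sum_congr rfl fun x _ => ?_
    rw [← Finset.sum_add_distrib, ← Finset.sum_add_distrib]
    refine Finset.sum_congr rfl fun y _ => ?_
    rw [delta_eq π f ξ x y]
    simp only [hh, hk]
    ring
  rw [key, cancel_sum q π h hq1 hπstat, cancel_sum q π k hq1 hπstat]
  rw [← Finset.sum_sub_distrib]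
  simp only [← Finset.sum_sub_distrib]
  rw [zero_add, zero_add]
  refine Finset.sum_congr rfl fun x _ => Finset.sum_congr rfl fun y _ => by ring
end

section
/- Let f : S × S → ℝ be bounded Borel measurable and F_f(ξ) = Σ_{x,y∈E} π(x)π(y) f(ξ(x), ξ(y)). Then for every ξ ∈ S^E, L_μ F_f(ξ) = Σ_{x∈E} π(x)² ∫_S [f(σ,σ) − f(ξ(x),ξ(x))] dμ(σ) − Σ_{x∈E} π(x)² ∫_S [f(ξ(x),σ) + f(σ,ξ(x)) − 2 f(ξ(x),ξ(x))] dμ(σ) + Σ_{x,y∈E} π(x)π(y) ∫_S [f(ξ(x),σ) + f(σ,ξ(y)) − 2 f(ξ(x),ξ(y))] dμ(σ). -/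
open MeasureTheory Finset

/-- Proposition 2.3, mutation part (eq. 2.19). -/
theorem mutation_generator_on_Ff
    {E S : Type*} [Fintype E] [DecidableEq E]
    [MetricSpace S] [CompactSpace S] [MeasurableSpace S] [BorelSpace S]
    (hE : 2 ≤ Fintype.card E)
    (π : E → ℝ) (μ : Measure S) [IsFiniteMeasure μ]
    (hπpos : ∀ x, 0 < π x) (hπ1 : ∑ x, π x = 1)
    (f : S → S → ℝ)
    (hfmeas : Measurable (fun p : S × S => f p.1 p.2))
    (hfbdd : ∃ Cb : ℝ, ∀ σ τ : S, |f σ τ| ≤ Cb)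
    (ξ : E → S) :
    Lmu μ (Ftest π f) ξ =
      (∑ x : E, π x ^ 2 * ∫ σ, (f σ σ - f (ξ x) (ξ x)) ∂μ) -
      (∑ x : E, π x ^ 2 *
        ∫ σ, (f (ξ x) σ + f σ (ξ x) - 2 * f (ξ x) (ξ x)) ∂μ) +
      (∑ x : E, ∑ y : E, π x * π y *
        ∫ σ, (f (ξ x) σ + f σ (ξ y) - 2 * f (ξ x) (ξ y)) ∂μ) := by
  classical
  obtain ⟨Cb, hCb⟩ := hfbdd
  have hm1 : ∀ a : S, Measurable (fun σ => f a σ) :=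
    fun a => hfmeas.comp (measurable_const.prodMk measurable_id)
  have hm2 : ∀ b : S, Measurable (fun σ => f σ b) :=
    fun b => hfmeas.comp (measurable_id.prodMk measurable_const)
  have hm3 : Measurable (fun σ : S => f σ σ) :=
    hfmeas.comp (measurable_id.prodMk measurable_id)
  have hint : ∀ g : S → ℝ, Measurable g → (∀ σ, |g σ| ≤ Cb) → Integrable g μ :=
    fun g hg hb => (integrable_const Cb).mono' hg.aestronglyMeasurable
      (Filter.Eventually.of_forall fun σ => by simpa using hb σ)
  have hi1 : ∀ a : S, Integrable (fun σ => f a σ) μ := fun a => hint _ (hm1 a) (fun σ => hCb a σ)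
  have hi2 : ∀ b : S, Integrable (fun σ => f σ b) μ := fun b => hint _ (hm2 b) (fun σ => hCb σ b)
  have hi3 : Integrable (fun σ : S => f σ σ) μ := hint _ hm3 (fun σ => hCb σ σ)
  have hic : ∀ c : ℝ, Integrable (fun _ : S => c) μ := fun c => integrable_const c
  set A : E → ℝ := fun x => π x ^ 2 * ∫ σ, (f σ σ - f (ξ x) (ξ x)) ∂μ with hA
  set P : E → E → ℝ := fun x y => π x * π y * ∫ σ, (f σ (ξ y) - f (ξ x) (ξ y)) ∂μ with hP
  set Q : E → E → ℝ := fun x y => π y * π x * ∫ σ, (f (ξ y) σ - f (ξ y) (ξ x)) ∂μ with hQ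
  have key : ∀ x : E, (∫ σ, (Ftest π f (Function.update ξ x σ) - Ftest π f ξ) ∂μ)
      = A x + ∑ y ∈ univ.erase x, P x y + ∑ y ∈ univ.erase x, Q x y := by
    intro x
    have hpt : ∀ σ : S, Ftest π f (Function.update ξ x σ) - Ftest π f ξ
        = π x * π x * (f σ σ - f (ξ x) (ξ x))
          + (∑ y ∈ univ.erase x, π x * π y * (f σ (ξ y) - f (ξ x) (ξ y)))
          + ∑ y ∈ univ.erase x, π y * π x * (f (ξ y) σ - f (ξ y) (ξ x)) := by
      intro σ
      set u := Function.update ξ x σ with hu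
      have hux : u x = σ := Function.update_self x σ ξ
      have hune : ∀ a, a ≠ x → u a = ξ a := fun a ha => Function.update_of_ne ha σ ξ
      have expand : Ftest π f u - Ftest π f ξ
          = ∑ a : E, ∑ b : E, (π a * π b * f (u a) (u b) - π a * π b * f (ξ a) (ξ b)) := by
        simp only [Ftest, ← Finset.sum_sub_distrib]
      have inner_x : (∑ b : E, (π x * π b * f (u x) (u b) - π x * π b * f (ξ x) (ξ b)))
          = (π x * π x * f σ σ - π x * π x * f (ξ x) (ξ x))
            + ∑ b ∈ univ.erase x, (π x * π b * f σ (ξ b) - π x * π b * f (ξ x) (ξ b)) := by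
        rw [← Finset.add_sum_erase _ _ (mem_univ x)]
        congr 1
        · rw [hux]
        · exact Finset.sum_congr rfl fun b hb => by
            rw [hux, hune b (Finset.ne_of_mem_erase hb)]
      have inner_a : ∀ a ∈ univ.erase x,
          (∑ b : E, (π a * π b * f (u a) (u b) - π a * π b * f (ξ a) (ξ b)))
          = π a * π x * f (ξ a) σ - π a * π x * f (ξ a) (ξ x) := by
        intro a ha
        have hax : a ≠ x := Finset.ne_of_mem_erase ha
        rw [Finset.sum_eq_single x]
        · rw [hune a hax, hux]
        · intro b _ hbx
          rw [hune a hax, hune b hbx, sub_self]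
        · exact fun h => absurd (mem_univ x) h
      rw [expand, ← Finset.add_sum_erase _ _ (mem_univ x), inner_x,
        Finset.sum_congr rfl inner_a]
      simp only [mul_sub]
    have ig1 : Integrable (fun σ => π x * π x * (f σ σ - f (ξ x) (ξ x))) μ :=
      ((hi3.sub (hic _)).const_mul _)
    have ig2 : Integrable
        (fun σ => ∑ y ∈ univ.erase x, π x * π y * (f σ (ξ y) - f (ξ x) (ξ y))) μ :=
      integrable_finset_sum _ fun y _ => ((hi2 (ξ y)).sub (hic _)).const_mul _
    have ig3 : Integrable
        (fun σ => ∑ y ∈ univ.erase x, π y * π x * (f (ξ y) σ - f (ξ y) (ξ x))) μ :=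
      integrable_finset_sum _ fun y _ => ((hi1 (ξ y)).sub (hic _)).const_mul _
    have ig12 : Integrable (fun σ =>
        π x * π x * (f σ σ - f (ξ x) (ξ x))
          + ∑ y ∈ univ.erase x, π x * π y * (f σ (ξ y) - f (ξ x) (ξ y))) μ := ig1.add ig2
    simp only [hpt]
    have jP : ∀ y : E, Integrable (fun σ => π x * π y * (f σ (ξ y) - f (ξ x) (ξ y))) μ :=
      fun y => ((hi2 (ξ y)).sub (hic _)).const_mul _
    have jQ : ∀ y : E, Integrable (fun σ => π y * π x * (f (ξ y) σ - f (ξ y) (ξ x))) μ :=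
      fun y => ((hi1 (ξ y)).sub (hic _)).const_mul _
    rw [integral_add ig12 ig3, integral_add ig1 ig2,
      integral_finset_sum _ (fun y _ => jP y),
      integral_finset_sum _ (fun y _ => jQ y)]
    simp only [integral_const_mul, hA, hP, hQ, pow_two]
  have hPQ : ∀ x y : E, P x y + Q y x
      = π x * π y * ∫ σ, (f (ξ x) σ + f σ (ξ y) - 2 * f (ξ x) (ξ y)) ∂μ := by
    intro x y
    have h1 : ∀ σ : S, (f σ (ξ y) - f (ξ x) (ξ y)) + (f (ξ x) σ - f (ξ x) (ξ y))
        = f (ξ x) σ + f σ (ξ y) - 2 * f (ξ x) (ξ y) := fun σ => by ring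
    have j1 : Integrable (fun σ => f σ (ξ y) - f (ξ x) (ξ y)) μ := (hi2 (ξ y)).sub (hic _)
    have j2 : Integrable (fun σ => f (ξ x) σ - f (ξ x) (ξ y)) μ := (hi1 (ξ x)).sub (hic _)
    rw [hP, hQ, ← mul_add, ← integral_add j1 j2]
    simp only [h1]
  have hBdiag : ∀ x : E, P x x + Q x x
      = π x ^ 2 * ∫ σ, (f (ξ x) σ + f σ (ξ x) - 2 * f (ξ x) (ξ x)) ∂μ := by
    intro x
    rw [hPQ x x, pow_two]
  have hC : (∑ x : E, ∑ y : E, π x * π y *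
        ∫ σ, (f (ξ x) σ + f σ (ξ y) - 2 * f (ξ x) (ξ y)) ∂μ)
      = (∑ x : E, ∑ y : E, P x y) + ∑ x : E, ∑ y : E, Q x y := by
    have hswap : (∑ x : E, ∑ y : E, Q y x) = ∑ x : E, ∑ y : E, Q x y := Finset.sum_comm
    calc (∑ x : E, ∑ y : E, π x * π y *
          ∫ σ, (f (ξ x) σ + f σ (ξ y) - 2 * f (ξ x) (ξ y)) ∂μ)
        = ∑ x : E, ∑ y : E, (P x y + Q y x) :=
          Finset.sum_congr rfl fun x _ => Finset.sum_congr rfl fun y _ => (hPQ x y).symm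
      _ = (∑ x : E, ∑ y : E, P x y) + ∑ x : E, ∑ y : E, Q y x := by
          simp [Finset.sum_add_distrib]
      _ = (∑ x : E, ∑ y : E, P x y) + ∑ x : E, ∑ y : E, Q x y := by rw [hswap]
  have hB : (∑ x : E, π x ^ 2 *
        ∫ σ, (f (ξ x) σ + f σ (ξ x) - 2 * f (ξ x) (ξ x)) ∂μ)
      = ∑ x : E, (P x x + Q x x) :=
    Finset.sum_congr rfl fun x _ => (hBdiag x).symm
  rw [Lmu]
  simp only [key]
  rw [hC, hB]
  simp only [Finset.sum_erase_eq_sub (Finset.mem_univ _)]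
  rw [Finset.sum_add_distrib, Finset.sum_add_distrib, Finset.sum_sub_distrib,
    Finset.sum_sub_distrib, Finset.sum_add_distrib]
  ring
end

section
/- There exists a universal constant C ∈ (0,∞) such that the following holds for every finite set E with #E ≥ 2, every irreducible stochastic kernel q on E with zero trace and stationary π, every compact metric space S, and every finite nonnegative Borel measure μ on S. For every continuous f : S × S → ℝ with f(σ,σ) = 0 for all σ and sup_{σ,τ} |f(σ,τ)| ≤ 1, all x, y ∈ E and t ≥ 0, letting F(ζ) := f(ζ(x), ζ(y)) for ζ ∈ S^E, one has sup_{ξ ∈ S^E} (P_t F)(ξ) ≤ (C + 1) P(M_{x,y} > t) + C μ(S) ∫_0^t P(M_{x,y} > r) dr. -/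
open MeasureTheory Finset

universe u v

/-- Exponential of a bounded operator on a normed space, `exp(A)`. -/
noncomputable def expOp {M : Type*} [NormedAddCommGroup M] [NormedSpace ℝ M]
    (A : M →L[ℝ] M) : M →L[ℝ] M :=
  NormedSpace.exp A

/-- Off-diagonal entries of the coalescing-pair generator `Q̂`. -/
noncomputable def QhatOff {E : Type*} [Fintype E] [DecidableEq E]
    (q : E → E → ℝ) : Matrix (E × E) (E × E) ℝ :=
  Matrix.of fun p r =>
    if r = p then 0
    else if p.1 = p.2 then (if r.1 = r.2 then q p.1 r.1 else 0)
    else if r.2 = p.2 ∧ r.1 ≠ p.1 then q p.1 r.1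
    else if r.1 = p.1 ∧ r.2 ≠ p.2 then q p.2 r.2
    else 0

/-- The coalescing-pair generator matrix `Q̂` on `E × E` (rows sum to zero). -/
noncomputable def Qhat {E : Type*} [Fintype E] [DecidableEq E]
    (q : E → E → ℝ) : Matrix (E × E) (E × E) ℝ :=
  Matrix.of fun p r =>
    if r = p then -(∑ r' : E × E, QhatOff q p r') else QhatOff q p r

/-- The coalescing-pair semigroup `p̂_t = exp(t Q̂)`. -/
noncomputable def coalSemigroup {E : Type*} [Fintype E] [DecidableEq E]
    (q : E → E → ℝ) (t : ℝ) : Matrix (E × E) (E × E) ℝ :=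
  NormedSpace.exp (t • Qhat q)

/-- The non-meeting probability `P(M_{x,y} > t) = ∑_{a ≠ b} p̂_t((x,y),(a,b))`. -/
noncomputable def meetGT {E : Type*} [Fintype E] [DecidableEq E]
    (q : E → E → ℝ) (t : ℝ) (x y : E) : ℝ :=
  ∑ p ∈ Finset.univ.filter (fun p : E × E => p.1 ≠ p.2), coalSemigroup q t (x, y) p

/-- The observable `ζ ↦ f(ζ(x), ζ(y))` as a continuous function on `S^E`. -/
noncomputable def pairObs {E S : Type*} [TopologicalSpace S]
    (x y : E) (f : C(S × S, ℝ)) : C((E → S), ℝ) :=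
  ⟨fun ζ => f (ζ x, ζ y), by fun_prop⟩


/-!
Duhamel's formula along the dual coalescing pair. For a law `g` on `E × E` let
`v g ζ = ∑ r, g r * f (ζ r.1, ζ r.2)` (this is `pairField f g ζ`). Since `f` vanishes on the
diagonal, voter-model duality gives `L_VM (v g) = v (g Q̂)`, so along `v_s = v (p̂_s ((x, y), ·))`
the defect `∂ₛ v_s - L v_s` is minus the mutation part, and
`P_t F = v_t - ∫₀ᵗ P_{t-s} (∂ₛ v_s - L v_s) ds`.
Only pairs that have not met contribute: `v_t ≤ ‖f‖ P(M > t)`, and as `L_μ` resamples just the two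
sites of the pair, the defect is at most `4 ‖f‖ μ(S) P(M > s)`. Finally `P_u` is a contraction:
`‖L + c‖ ≤ c` for `c = |E| (1 + μ(S))`, so `‖exp (u L)‖ ≤ e^{-uc} e^{uc} = 1`. This gives `C = 4`.
-/
namespace NormedSpace

variable {𝔸 : Type*} [NormedRing 𝔸] [NormedAlgebra ℝ 𝔸]

theorem exp_add_algebraMap [CompleteSpace 𝔸] (x : 𝔸) (a : ℝ) :
    exp (x + algebraMap ℝ 𝔸 a) = Real.exp a • exp x := by
  let _ : NormedAlgebra ℚ 𝔸 := NormedAlgebra.restrictScalars ℚ ℝ 𝔸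
  rw [exp_add_of_commute (Algebra.commutes a x).symm, ← algebraMap_exp_comm,
    ← Real.exp_eq_exp_ℝ, ← Algebra.commutes, ← Algebra.smul_def]

theorem norm_exp_le_exp_norm (h1 : ‖(1 : 𝔸)‖ ≤ 1) (x : 𝔸) : ‖exp x‖ ≤ Real.exp ‖x‖ := by
  have hpow (n : ℕ) : ‖x ^ n‖ ≤ ‖x‖ ^ n := by
    rcases n.eq_zero_or_pos with rfl | hn
    · simpa using h1
    · exact norm_pow_le' x hn
  rw [exp_eq_tsum ℝ, Real.exp_eq_exp_ℝ, exp_eq_tsum ℝ]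
  refine (norm_tsum_le_tsum_norm (norm_expSeries_summable' x)).trans
    (Summable.tsum_le_tsum (fun n => ?_) (norm_expSeries_summable' x) (expSeries_summable' ‖x‖))
  rw [norm_smul, smul_eq_mul, Real.norm_of_nonneg (by positivity)]
  gcongr
  exact hpow n

theorem norm_exp_smul_le_one [CompleteSpace 𝔸] (h1 : ‖(1 : 𝔸)‖ ≤ 1) {A : 𝔸} {c : ℝ}
    (hA : ‖A + algebraMap ℝ 𝔸 c‖ ≤ c) {u : ℝ} (hu : 0 ≤ u) : ‖exp (u • A)‖ ≤ 1 := by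
  have hsplit : u • A = u • (A + algebraMap ℝ 𝔸 c) + algebraMap ℝ 𝔸 (-(u * c)) := by
    simp only [Algebra.smul_def, map_neg, map_mul]
    noncomm_ring
  calc ‖exp (u • A)‖ = Real.exp (-(u * c)) * ‖exp (u • (A + algebraMap ℝ 𝔸 c))‖ := by
        rw [hsplit, exp_add_algebraMap, norm_smul, Real.norm_of_nonneg (Real.exp_nonneg _)]
    _ ≤ Real.exp (-(u * c)) * Real.exp (u * c) := by
        gcongr
        refine (norm_exp_le_exp_norm h1 _).trans (Real.exp_le_exp.2 ?_)
        rw [norm_smul, Real.norm_of_nonneg hu]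
        gcongr
    _ = 1 := by rw [← Real.exp_add, neg_add_cancel, Real.exp_zero]

end NormedSpace

namespace Matrix

open NormedSpace

attribute [local instance] Matrix.linftyOpNormedRing Matrix.linftyOpNormedAlgebra

variable {n : Type*} [Fintype n] [DecidableEq n]

theorem exp_apply_nonneg_of_nonneg {A : Matrix n n ℝ} (hA : ∀ i j, 0 ≤ A i j) (i j : n) :
    0 ≤ exp A i j := by
  have hpow (k : ℕ) : ∀ i j, 0 ≤ (A ^ k) i j := by
    induction k with
    | zero => intro i j; rw [pow_zero, one_apply]; split_ifs <;> norm_num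
    | succ k ih =>
      intro i j
      rw [pow_succ, mul_apply]
      exact Finset.sum_nonneg fun l _ => mul_nonneg (ih i l) (hA l j)
  have hsum := Pi.hasSum.1 (Pi.hasSum.1 (exp_series_hasSum_exp' (𝕂 := ℝ) A) i) j
  exact hsum.nonneg fun k => mul_nonneg (by positivity) (hpow k i j)

theorem exp_apply_nonneg {A : Matrix n n ℝ} (hA : ∀ i j, i ≠ j → 0 ≤ A i j) (i j : n) :
    0 ≤ exp A i j := by
  set c := ∑ k, |A k k|
  have hshift : ∀ i j, 0 ≤ (A + algebraMap ℝ _ c) i j := by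
    intro i j
    rw [add_apply, algebraMap_matrix_apply]
    split_ifs with h
    · subst h
      have := Finset.single_le_sum (f := fun k => |A k k|) (fun k _ => abs_nonneg _)
        (Finset.mem_univ i)
      simp only [Algebra.algebraMap_self, RingHom.id_apply]
      linarith [neg_abs_le (A i i)]
    · simpa using hA i j h
  have hexp : exp A = Real.exp (-c) • exp (A + algebraMap ℝ _ c) := by
    have h := exp_add_algebraMap (A + algebraMap ℝ (Matrix n n ℝ) c) (-c)
    rwa [add_assoc, ← map_add, add_neg_cancel, map_zero, add_zero] at h
  rw [hexp, smul_apply, smul_eq_mul]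
  exact mul_nonneg (Real.exp_nonneg _) (exp_apply_nonneg_of_nonneg hshift i j)

theorem hasDerivAt_exp_smul_apply (A : Matrix n n ℝ) (i : n) (s : ℝ) :
    HasDerivAt (fun u : ℝ => exp (u • A) i) ((exp (s • A) * A) i) s := by
  have h := hasDerivAt_exp_smul_const (𝕂 := ℝ) A s
  let row : Matrix n n ℝ →L[ℝ] (n → ℝ) := LinearMap.toContinuousLinearMap (LinearMap.proj i)
  exact row.hasFDerivAt.comp_hasDerivAt s h

end Matrix

section CoalescingPair

variable {E : Type*} [Fintype E] [DecidableEq E] {q : E → E → ℝ}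

theorem QhatOff_nonneg (hq0 : ∀ x y, 0 ≤ q x y) (p r : E × E) : 0 ≤ QhatOff q p r := by
  simp only [QhatOff, Matrix.of_apply]
  split_ifs <;> first | exact le_rfl | exact hq0 _ _

theorem QhatOff_diag_apply_of_ne (a : E) {r : E × E} (hr : r.1 ≠ r.2) :
    QhatOff q (a, a) r = 0 := by
  simp [QhatOff, hr]

theorem Qhat_apply_of_ne {p r : E × E} (h : r ≠ p) : Qhat q p r = QhatOff q p r := by
  simp [Qhat, h]

theorem sum_Qhat_mul (p : E × E) (g : E × E → ℝ) :
    ∑ r, Qhat q p r * g r = ∑ r, QhatOff q p r * (g r - g p) := by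
  have hsplit : ∀ r, Qhat q p r
      = QhatOff q p r + if r = p then -∑ r', QhatOff q p r' else 0 := by
    intro r
    by_cases h : r = p
    · subst h; simp [Qhat, QhatOff]
    · simp [Qhat_apply_of_ne h, h]
  simp only [hsplit, add_mul, ite_mul, zero_mul, Finset.sum_add_distrib, Finset.sum_ite_eq',
    Finset.mem_univ, if_true, mul_sub, Finset.sum_sub_distrib, Finset.sum_mul, neg_mul]
  ring

theorem sum_QhatOff_mul_of_ne {a b : E} (hab : a ≠ b) {g : E × E → ℝ} (hg : g (a, b) = 0) :
    ∑ r, QhatOff q (a, b) r * g r = ∑ c, q a c * g (c, b) + ∑ d, q b d * g (a, d) := by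
  have hpoint : ∀ c d, QhatOff q (a, b) (c, d) * g (c, d)
      = (if d = b then q a c * g (c, b) else 0) + if c = a then q b d * g (a, d) else 0 := by
    intro c d
    rcases eq_or_ne c a with hc | hc <;> rcases eq_or_ne d b with hd | hd <;>
      simp [QhatOff, Prod.ext_iff, hab, hc, hd, hg]
  rw [Fintype.sum_prod_type]
  simp only [hpoint, Finset.sum_add_distrib, Finset.sum_ite_eq', Finset.mem_univ, if_true]
  rw [Finset.sum_comm (f := fun c d => if c = a then q b d * g (a, d) else 0)]
  simp only [Finset.sum_ite_eq', Finset.mem_univ, if_true]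

theorem coalSemigroup_zero : coalSemigroup q 0 = 1 := by
  simp [coalSemigroup]

theorem coalSemigroup_apply_nonneg (hq0 : ∀ x y, 0 ≤ q x y) {s : ℝ} (hs : 0 ≤ s)
    (p r : E × E) : 0 ≤ coalSemigroup q s p r :=
  Matrix.exp_apply_nonneg (fun i j hij => by
    rw [Matrix.smul_apply, Qhat_apply_of_ne hij.symm, smul_eq_mul]
    exact mul_nonneg hs (QhatOff_nonneg hq0 i j)) p r

theorem hasDerivAt_coalSemigroup (p : E × E) (s : ℝ) :
    HasDerivAt (fun u => coalSemigroup q u p) ((coalSemigroup q s * Qhat q) p) s :=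
  Matrix.hasDerivAt_exp_smul_apply (Qhat q) p s

theorem continuous_coalSemigroup : Continuous (coalSemigroup q) :=
  continuous_pi fun p => continuous_iff_continuousAt.2 fun s =>
    (hasDerivAt_coalSemigroup p s).continuousAt

theorem meetGT_nonneg (hq0 : ∀ x y, 0 ≤ q x y) {s : ℝ} (hs : 0 ≤ s) (x y : E) :
    0 ≤ meetGT q s x y :=
  Finset.sum_nonneg fun r _ => coalSemigroup_apply_nonneg hq0 hs (x, y) r

theorem continuous_meetGT (x y : E) : Continuous fun s => meetGT q s x y :=
  continuous_finsetSum _ fun r _ =>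
    (continuous_apply r).comp ((continuous_apply (x, y)).comp continuous_coalSemigroup)

end CoalescingPair

@[simp]
theorem pairObs_apply {E S : Type*} [TopologicalSpace S] (x y : E) (f : C(S × S, ℝ))
    (ζ : E → S) : pairObs x y f ζ = f (ζ x, ζ y) :=
  rfl

section PairObservables

variable {E : Type*} [Fintype E] [DecidableEq E] {S : Type*} [TopologicalSpace S]
  {f : C(S × S, ℝ)}

/-- Duality of the voter model with coalescing pairs. -/
theorem LVM_pairObs (q : E → E → ℝ) (hfd : ∀ σ, f (σ, σ) = 0)
    (a b : E) (ζ : E → S) :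
    LVM q (pairObs a b f) ζ = ∑ r, Qhat q (a, b) r * pairObs r.1 r.2 f ζ := by
  rw [sum_Qhat_mul]
  rcases eq_or_ne a b with rfl | hab
  · refine (Finset.sum_eq_zero fun z _ => Finset.sum_eq_zero fun w _ => by simp [hfd]).trans
      (Finset.sum_eq_zero fun r _ => ?_).symm
    by_cases hr : r.1 = r.2
    · simp [hr, hfd]
    · simp [QhatOff_diag_apply_of_ne a hr]
  · rw [sum_QhatOff_mul_of_ne hab (sub_self _), LVM,
      Fintype.sum_eq_add a b hab fun z hz => Finset.sum_eq_zero fun w _ => by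
        simp [Function.update_of_ne hz.1.symm, Function.update_of_ne hz.2.symm]]
    simp [Function.update_of_ne hab, Function.update_of_ne hab.symm]

theorem Lmu_pairObs_self [MeasurableSpace S] (μ : Measure S) (hfd : ∀ σ, f (σ, σ) = 0) (a : E)
    (ζ : E → S) : Lmu μ (pairObs a a f) ζ = 0 := by
  simp [Lmu, hfd]

end PairObservables

theorem integrable_comp_update {E S : Type*} [DecidableEq E] [TopologicalSpace S]
    [CompactSpace S] [MeasurableSpace S] [OpensMeasurableSpace S] (μ : Measure S)
    [IsFiniteMeasure μ] (G : C((E → S), ℝ)) (ζ : E → S) (z : E) :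
    Integrable (fun σ => G (Function.update ζ z σ)) μ :=
  (G.continuous.comp (continuous_const.update z continuous_id)).integrable_of_hasCompactSupport
    (HasCompactSupport.of_compactSpace _)

section Generator

variable {E : Type*} [Fintype E] [DecidableEq E] {S : Type*} [TopologicalSpace S] [CompactSpace S]

theorem abs_LVM_add_card_mul_le {q : E → E → ℝ} (hq0 : ∀ x y, 0 ≤ q x y)
    (hq1 : ∀ x, ∑ y, q x y = 1) (G : C((E → S), ℝ)) (ζ : E → S) :
    |LVM q G ζ + Fintype.card E * G ζ| ≤ Fintype.card E * ‖G‖ := by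
  have hshift : LVM q G ζ + Fintype.card E * G ζ
      = ∑ z, ∑ w, q z w * G (Function.update ζ z (ζ w)) := by
    simp [LVM, mul_sub, Finset.sum_sub_distrib, ← Finset.sum_mul, hq1]
  rw [hshift]
  calc |∑ z, ∑ w, q z w * G (Function.update ζ z (ζ w))| ≤ ∑ z, ∑ w, q z w * ‖G‖ := by
        refine (Finset.abs_sum_le_sum_abs _ _).trans <| Finset.sum_le_sum fun z _ =>
          (Finset.abs_sum_le_sum_abs _ _).trans <| Finset.sum_le_sum fun w _ => ?_
        rw [abs_mul, abs_of_nonneg (hq0 z w)]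
        exact mul_le_mul_of_nonneg_left (G.norm_coe_le_norm _) (hq0 z w)
    _ = Fintype.card E * ‖G‖ := by simp [← Finset.sum_mul, hq1]

variable [MeasurableSpace S] (μ : Measure S) [IsFiniteMeasure μ]

theorem abs_Lmu_pairObs_le (f : C(S × S, ℝ)) (a b : E) (ζ : E → S) :
    |Lmu μ (pairObs a b f) ζ| ≤ 4 * ‖f‖ * μ.real Set.univ := by
  set T : E → ℝ := fun z => ∫ σ, (pairObs a b f (Function.update ζ z σ) - pairObs a b f ζ) ∂μ
  have hT : ∀ z, |T z| ≤ 2 * ‖f‖ * μ.real Set.univ := fun z => by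
    rw [← Real.norm_eq_abs]
    exact norm_integral_le_of_norm_le_const <| ae_of_all _ fun σ => (abs_sub _ _).trans <|
      (add_le_add (f.norm_coe_le_norm _) (f.norm_coe_le_norm _)).trans_eq (two_mul _).symm
  have hzero : ∀ z ∈ Finset.univ, z ∉ ({a, b} : Finset E) → T z = 0 := by
    intro z _ hz
    simp only [Finset.mem_insert, Finset.mem_singleton, not_or] at hz
    simp [T, Function.update_of_ne (Ne.symm hz.1), Function.update_of_ne (Ne.symm hz.2)]
  calc |Lmu μ (pairObs a b f) ζ| = |∑ z ∈ {a, b}, T z| := by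
        rw [Finset.sum_subset (Finset.subset_univ _) hzero]; rfl
    _ ≤ ∑ z ∈ {a, b}, |T z| := Finset.abs_sum_le_sum_abs _ _
    _ ≤ #{a, b} • (2 * ‖f‖ * μ.real Set.univ) := Finset.sum_le_card_nsmul _ _ _ fun z _ => hT z
    _ ≤ 2 • (2 * ‖f‖ * μ.real Set.univ) := by gcongr; exact Finset.card_le_two
    _ = 4 * ‖f‖ * μ.real Set.univ := by rw [two_nsmul]; ring

variable [OpensMeasurableSpace S]

theorem abs_Lmu_add_mul_le (G : C((E → S), ℝ)) (ζ : E → S) :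
    |Lmu μ G ζ + Fintype.card E * μ.real Set.univ * G ζ|
      ≤ Fintype.card E * μ.real Set.univ * ‖G‖ := by
  have hshift : Lmu μ G ζ + Fintype.card E * μ.real Set.univ * G ζ
      = ∑ z, ∫ σ, G (Function.update ζ z σ) ∂μ := by
    simp only [Lmu, integral_sub (integrable_comp_update μ G ζ _) (integrable_const _),
      integral_const, smul_eq_mul, Finset.sum_sub_distrib, Finset.sum_const, Finset.card_univ,
      nsmul_eq_mul]
    ring
  rw [hshift]
  calc |∑ z, ∫ σ, G (Function.update ζ z σ) ∂μ| ≤ ∑ _z : E, ‖G‖ * μ.real Set.univ :=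
        (Finset.abs_sum_le_sum_abs _ _).trans <| Finset.sum_le_sum fun z _ =>
          norm_integral_le_of_norm_le_const <| ae_of_all _ fun σ => G.norm_coe_le_norm _
    _ = Fintype.card E * μ.real Set.univ * ‖G‖ := by simp; ring

end Generator

theorem abs_sum_mul_le_of_diag_eq_zero {E : Type*} [Fintype E] [DecidableEq E]
    {g h : E × E → ℝ} (hg : ∀ r, 0 ≤ g r) (hdiag : ∀ a, h (a, a) = 0) {M : ℝ}
    (hM : ∀ r, |h r| ≤ M) :
    |∑ r, g r * h r| ≤ M * ∑ r ∈ Finset.univ.filter (fun r : E × E => r.1 ≠ r.2), g r := by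
  rw [← Finset.sum_filter_of_ne (p := fun r : E × E => r.1 ≠ r.2) fun r _ hr hr' => hr (by
    rw [show r = (r.1, r.1) from Prod.ext rfl hr'.symm, hdiag, mul_zero]), Finset.mul_sum]
  refine (Finset.abs_sum_le_sum_abs _ _).trans (Finset.sum_le_sum fun r _ => ?_)
  rw [abs_mul, abs_of_nonneg (hg r), mul_comm]
  exact mul_le_mul_of_nonneg_right (hM r) (hg r)

theorem expOp_smul_apply_eq_sub_integral {X : Type*} [NormedAddCommGroup X] [NormedSpace ℝ X]
    [CompleteSpace X] (L : X →L[ℝ] X) {v v' : ℝ → X} (hv : ∀ s, HasDerivAt v (v' s) s)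
    (hv' : Continuous v') (t : ℝ) :
    expOp (t • L) (v 0) = v t - ∫ s in (0 : ℝ)..t, expOp ((t - s) • L) (v' s - L (v s)) := by
  have hexp : ∀ s, HasDerivAt (fun s => expOp ((t - s) • L)) (-(expOp ((t - s) • L) * L)) s :=
    fun s => by
      simpa [expOp, Function.comp_def] using (hasDerivAt_exp_smul_const (𝕂 := ℝ) L (t - s)).scomp s
        ((hasDerivAt_id s).const_sub t)
  have hH : ∀ s, HasDerivAt (fun s => expOp ((t - s) • L) (v s))
      (expOp ((t - s) • L) (v' s - L (v s))) s := fun s => by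
    convert (hexp s).clm_apply (hv s) using 1
    simp [map_sub]
    abel
  have hcont : Continuous fun s => expOp ((t - s) • L) (v' s - L (v s)) :=
    (continuous_iff_continuousAt.2 fun s => (hexp s).continuousAt).clm_apply
      (hv'.sub (L.continuous.comp (continuous_iff_continuousAt.2 fun s => (hv s).continuousAt)))
  rw [intervalIntegral.integral_eq_sub_of_hasDerivAt (fun s _ => hH s)
    (hcont.intervalIntegrable _ _)]
  simp [expOp]

section PairField

variable {E : Type*} [Fintype E] {S : Type*} [TopologicalSpace S] [CompactSpace S]

noncomputable def pairField (f : C(S × S, ℝ)) : (E × E → ℝ) →L[ℝ] C((E → S), ℝ) :=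
  ∑ r, (ContinuousLinearMap.proj r).smulRight (pairObs r.1 r.2 f)

theorem pairField_apply (f : C(S × S, ℝ)) (g : E × E → ℝ) :
    pairField f g = ∑ r, g r • pairObs r.1 r.2 f := by
  simp [pairField]

theorem pairField_apply_apply (f : C(S × S, ℝ)) (g : E × E → ℝ) (ζ : E → S) :
    pairField f g ζ = ∑ r, g r * f (ζ r.1, ζ r.2) := by
  simp [pairField_apply]

theorem pairField_one_apply [DecidableEq E] (f : C(S × S, ℝ)) (p : E × E) :
    pairField f ((1 : Matrix (E × E) (E × E) ℝ) p) = pairObs p.1 p.2 f := by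
  ext ζ
  simp [pairField_apply_apply, Matrix.one_apply]

theorem pairField_coalSemigroup_apply_le [DecidableEq E] {q : E → E → ℝ}
    (hq0 : ∀ x y, 0 ≤ q x y) {f : C(S × S, ℝ)} (hfd : ∀ σ, f (σ, σ) = 0) (x y : E) {s : ℝ}
    (hs : 0 ≤ s) (ξ : E → S) : pairField f (coalSemigroup q s (x, y)) ξ ≤ ‖f‖ * meetGT q s x y :=
  (le_abs_self _).trans <| by
    simpa [pairField_apply_apply, meetGT] using abs_sum_mul_le_of_diag_eq_zero
      (coalSemigroup_apply_nonneg hq0 hs (x, y)) (fun a => hfd (ξ a))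
      (fun r => f.norm_coe_le_norm (ξ r.1, ξ r.2))

end PairField

section VoterModel

variable {E : Type*} [Fintype E] [DecidableEq E] {S : Type*} [TopologicalSpace S] [CompactSpace S]
  [MeasurableSpace S] {q : E → E → ℝ} {μ : Measure S} {L : C((E → S), ℝ) →L[ℝ] C((E → S), ℝ)}
  {f : C(S × S, ℝ)}

theorem generator_pairField (hL : ∀ F ζ, L F ζ = LVM q F ζ + Lmu μ F ζ)
    (hfd : ∀ σ, f (σ, σ) = 0) (P : Matrix (E × E) (E × E) ℝ) (p : E × E) (ζ : E → S) :
    L (pairField f (P p)) ζ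
      = pairField f ((P * Qhat q) p) ζ + ∑ r, P p r * Lmu μ (pairObs r.1 r.2 f) ζ := by
  simp only [pairField_apply, map_sum, map_smul, ContinuousMap.sum_apply,
    ContinuousMap.smul_apply, smul_eq_mul, hL, LVM_pairObs q hfd, mul_add,
    Finset.sum_add_distrib, Matrix.mul_apply, Finset.mul_sum, Finset.sum_mul]
  rw [Finset.sum_comm]
  simp only [pairObs_apply, mul_assoc]

theorem norm_pairField_mul_Qhat_sub_le [IsFiniteMeasure μ] (hq0 : ∀ x y, 0 ≤ q x y)
    (hL : ∀ F ζ, L F ζ = LVM q F ζ + Lmu μ F ζ) (hfd : ∀ σ, f (σ, σ) = 0) (x y : E) {s : ℝ}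
    (hs : 0 ≤ s) :
    ‖pairField f ((coalSemigroup q s * Qhat q) (x, y)) - L (pairField f (coalSemigroup q s (x, y)))‖
      ≤ 4 * ‖f‖ * μ.real Set.univ * meetGT q s x y :=
  (ContinuousMap.norm_le _ (by positivity [meetGT_nonneg hq0 hs x y])).2 fun ζ => by
    rw [ContinuousMap.sub_apply, generator_pairField hL hfd, sub_add_cancel_left, norm_neg]
    exact abs_sum_mul_le_of_diag_eq_zero (coalSemigroup_apply_nonneg hq0 hs (x, y))
      (fun a => Lmu_pairObs_self μ hfd a ζ) (fun r => abs_Lmu_pairObs_le μ f r.1 r.2 ζ)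

variable [OpensMeasurableSpace S] [IsFiniteMeasure μ]

theorem norm_expOp_smul_le_one (hq0 : ∀ x y, 0 ≤ q x y) (hq1 : ∀ x, ∑ y, q x y = 1)
    (hL : ∀ F ζ, L F ζ = LVM q F ζ + Lmu μ F ζ) {u : ℝ} (hu : 0 ≤ u) :
    ‖expOp (u • L)‖ ≤ 1 := by
  set c := Fintype.card E * (1 + μ.real Set.univ)
  refine NormedSpace.norm_exp_smul_le_one (A := L) (c := c) ?_ ?_ hu
  · exact ContinuousLinearMap.norm_id_le
  refine ContinuousLinearMap.opNorm_le_bound _ (by positivity) fun G =>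
    (ContinuousMap.norm_le _ (by positivity)).2 fun ζ => ?_
  calc ‖(L + algebraMap ℝ _ c) G ζ‖
      = |(LVM q G ζ + Fintype.card E * G ζ)
          + (Lmu μ G ζ + Fintype.card E * μ.real Set.univ * G ζ)| := by
        simp only [add_apply, ContinuousLinearMap.algebraMap_apply,
          ContinuousMap.add_apply, ContinuousMap.smul_apply, smul_eq_mul, hL, Real.norm_eq_abs, c]
        ring_nf
    _ ≤ Fintype.card E * ‖G‖ + Fintype.card E * μ.real Set.univ * ‖G‖ :=
        (abs_add_le _ _).trans
          (add_le_add (abs_LVM_add_card_mul_le hq0 hq1 G ζ) (abs_Lmu_add_mul_le μ G ζ))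
    _ = c * ‖G‖ := by ring

theorem expOp_smul_pairObs_le (hq0 : ∀ x y, 0 ≤ q x y) (hq1 : ∀ x, ∑ y, q x y = 1)
    (hL : ∀ F ζ, L F ζ = LVM q F ζ + Lmu μ F ζ) (hfd : ∀ σ, f (σ, σ) = 0) (x y : E) {t : ℝ}
    (ht : 0 ≤ t) (ξ : E → S) :
    expOp (t • L) (pairObs x y f) ξ
      ≤ ‖f‖ * meetGT q t x y + 4 * ‖f‖ * μ.real Set.univ * ∫ s in (0 : ℝ)..t, meetGT q s x y := by
  set v : ℝ → C((E → S), ℝ) := fun s => pairField f (coalSemigroup q s (x, y))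
  set v' : ℝ → C((E → S), ℝ) := fun s => pairField f ((coalSemigroup q s * Qhat q) (x, y))
  have hv : ∀ s, HasDerivAt v (v' s) s := fun s =>
    (pairField f).hasFDerivAt.comp_hasDerivAt s (hasDerivAt_coalSemigroup (x, y) s)
  have hv' : Continuous v' := (pairField f).continuous.comp
    ((continuous_apply (x, y)).comp (continuous_coalSemigroup.matrix_mul continuous_const))
  have hv0 : v 0 = pairObs x y f := by simp [v, coalSemigroup_zero, pairField_one_apply]
  have hintegral : ‖∫ s in (0 : ℝ)..t, expOp ((t - s) • L) (v' s - L (v s))‖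
      ≤ 4 * ‖f‖ * μ.real Set.univ * ∫ s in (0 : ℝ)..t, meetGT q s x y := by
    rw [← intervalIntegral.integral_const_mul]
    refine intervalIntegral.norm_integral_le_of_norm_le ht (ae_of_all _ fun s hs => ?_)
      ((continuous_const.mul (continuous_meetGT x y)).intervalIntegrable _ _)
    calc ‖expOp ((t - s) • L) (v' s - L (v s))‖ ≤ ‖expOp ((t - s) • L)‖ * ‖v' s - L (v s)‖ :=
          ContinuousLinearMap.le_opNorm _ _
      _ ≤ 1 * (4 * ‖f‖ * μ.real Set.univ * meetGT q s x y) :=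
          mul_le_mul (norm_expOp_smul_le_one hq0 hq1 hL (sub_nonneg.2 hs.2))
            (norm_pairField_mul_Qhat_sub_le hq0 hL hfd x y hs.1.le) (norm_nonneg _) zero_le_one
      _ = 4 * ‖f‖ * μ.real Set.univ * meetGT q s x y := one_mul _
  rw [← hv0, expOp_smul_apply_eq_sub_integral L hv hv' t, ContinuousMap.sub_apply]
  have hI := (abs_le.1 (ContinuousMap.norm_coe_le_norm
    (∫ s in (0 : ℝ)..t, expOp ((t - s) • L) (v' s - L (v s))) ξ)).1
  linarith [pairField_coalSemigroup_apply_le hq0 hfd x y ht ξ]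

end VoterModel

/-- The bound from the proof of Proposition 3.4: there is a universal constant `C` with
`sup_ξ E_ξ[f(ξ_t(x), ξ_t(y))] ≤ (C+1) P(M_{x,y} > t) + C μ(S) ∫_0^t P(M_{x,y} > r) dr`. -/
theorem two_point_function_upper_bound :
    ∃ C : ℝ, 0 < C ∧
      ∀ (E : Type u) [Fintype E] [DecidableEq E],
        2 ≤ Fintype.card E →
        ∀ (S : Type v) [MetricSpace S] [CompactSpace S] [MeasurableSpace S] [BorelSpace S],
        ∀ (q : E → E → ℝ) (π : E → ℝ) (μ : Measure S) [IsFiniteMeasure μ],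
          (∀ x y, 0 ≤ q x y) → (∀ x, ∑ y, q x y = 1) → (∀ x, q x x = 0) →
          (∀ x y : E, ∃ n : ℕ, 0 < ((Matrix.of q) ^ n) x y) →
          (∀ x, 0 < π x) → (∑ x, π x = 1) →
          (∀ y, ∑ x, π x * q x y = π y) →
          ∀ (L : C((E → S), ℝ) →L[ℝ] C((E → S), ℝ)),
            (∀ (F : C((E → S), ℝ)) (ζ : E → S), L F ζ = LVM q (⇑F) ζ + Lmu μ (⇑F) ζ) →
            ∀ (f : C(S × S, ℝ)),
              (∀ σ : S, f (σ, σ) = 0) → (∀ p : S × S, |f p| ≤ 1) →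
              ∀ (x y : E) (t : ℝ), 0 ≤ t →
                ∀ ξ : E → S,
                  expOp (t • L) (pairObs x y f) ξ ≤
                    (C + 1) * meetGT q t x y +
                      C * (μ Set.univ).toReal * ∫ r in (0:ℝ)..t, meetGT q r x y := by
  refine ⟨4, four_pos, ?_⟩
  intro E _ _ _ S _ _ _ _ q _ μ _ hq0 hq1 _ _ _ _ _ L hL f hfd hf1 x y t ht ξ
  have hf : ‖f‖ ≤ 1 := (ContinuousMap.norm_le _ zero_le_one).2 hf1
  have hmeet := meetGT_nonneg hq0 ht x y
  have hint : 0 ≤ ∫ r in (0 : ℝ)..t, meetGT q r x y :=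
    intervalIntegral.integral_nonneg ht fun r hr => meetGT_nonneg hq0 hr.1 x y
  calc expOp (t • L) (pairObs x y f) ξ
      ≤ ‖f‖ * meetGT q t x y + 4 * ‖f‖ * μ.real Set.univ * ∫ r in (0 : ℝ)..t, meetGT q r x y :=
        expOp_smul_pairObs_le hq0 hq1 hL hfd x y ht ξ
    _ ≤ 1 * meetGT q t x y + 4 * 1 * μ.real Set.univ * ∫ r in (0 : ℝ)..t, meetGT q r x y := by
        gcongr
    _ ≤ (4 + 1) * meetGT q t x y + 4 * (μ Set.univ).toReal * ∫ r in (0:ℝ)..t, meetGT q r x y := by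
        rw [measureReal_def]; linarith
end

section
/- Let f : S × S → ℝ be bounded Borel measurable, symmetric (f(σ,τ) = f(τ,σ)), nonnegative, and vanishing on the diagonal (f(σ,σ) = 0 for all σ), and let F_f(ξ) = Σ_{x,y∈E} π(x)π(y) f(ξ(x), ξ(y)). Then for every ξ ∈ S^E, L^μ_VM F_f(ξ) ≤ 2 Σ_{x∈E} π(x) ∫_S f(σ, ξ(x)) dμ(σ). -/
/-!
Replacing the type at site `x` by `s` changes `F_f` by
`2 π(x) (Φ(s) - Φ(ξ x)) - 2 π(x)² f(s, ξ x)`, where `Φ(τ) = ∑_b π(b) f(τ, ξ b)`; the last term is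
nonpositive. For voting moves the first term averages to zero because `π` is stationary for `q`;
for mutations, dropping `-Φ(ξ x) ≤ 0` leaves `2 π(x) ∫ Φ dμ`, which sums to `2 ∫ Φ dμ`.
-/

open MeasureTheory Finset

theorem sum_mul_comp_update {E S R : Type*} [Fintype E] [DecidableEq E] [CommRing R]
    (w : E → R) (h : S → R) (ξ : E → S) (x : E) (s : S) :
    ∑ a, w a * h (Function.update ξ x s a) = ∑ a, w a * h (ξ a) + w x * (h s - h (ξ x)) := by
  have hoff : ∑ a ∈ {x}ᶜ, w a * h (Function.update ξ x s a) = ∑ a ∈ {x}ᶜ, w a * h (ξ a) :=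
    Finset.sum_congr rfl fun a ha => by
      rw [Function.update_of_ne (by simpa using ha)]
  rw [Fintype.sum_eq_add_sum_compl x, Fintype.sum_eq_add_sum_compl x (fun a => w a * h (ξ a)),
    Function.update_self, hoff]
  ring

theorem sum_sum_mul_sub_eq_zero_of_stationary {E : Type*} [Fintype E]
    {q : E → E → ℝ} {π : E → ℝ} (hq1 : ∀ x, ∑ y, q x y = 1)
    (hπstat : ∀ y, ∑ x, π x * q x y = π y) (h : E → ℝ) :
    ∑ x, ∑ y, π x * q x y * (h y - h x) = 0 := by
  have hin : ∑ x, ∑ y, π x * q x y * h y = ∑ y, π y * h y := by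
    rw [Finset.sum_comm]
    simp_rw [← Finset.sum_mul, hπstat]
  have hout : ∑ x, ∑ y, π x * q x y * h x = ∑ x, π x * h x := by
    simp_rw [← Finset.sum_mul, ← Finset.mul_sum, hq1, mul_one]
  simp_rw [mul_sub, Finset.sum_sub_distrib, hin, hout, sub_self]

section Ftest

variable {E S : Type*} [Fintype E] [DecidableEq E] (π : E → ℝ) (f : S → S → ℝ) (ξ : E → S)

noncomputable def meanInteraction (τ : S) : ℝ :=
  ∑ b, π b * f τ (ξ b)

omit [DecidableEq E] in
theorem Ftest_eq_sum_mul_meanInteraction :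
    Ftest π f ξ = ∑ a, π a * meanInteraction π f ξ (ξ a) := by
  simp only [Ftest, meanInteraction, Finset.mul_sum, mul_assoc]

theorem meanInteraction_update (x : E) (s τ : S) :
    meanInteraction π f (Function.update ξ x s) τ
      = meanInteraction π f ξ τ + π x * (f τ s - f τ (ξ x)) :=
  sum_mul_comp_update π (f τ) ξ x s

theorem Ftest_update_sub {f} (hfsymm : ∀ σ τ, f σ τ = f τ σ) (hfdiag : ∀ σ, f σ σ = 0)
    (x : E) (s : S) :
    Ftest π f (Function.update ξ x s) - Ftest π f ξ
      = 2 * π x * (meanInteraction π f ξ s - meanInteraction π f ξ (ξ x))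
        - 2 * π x ^ 2 * f s (ξ x) := by
  set ζ := Function.update ξ x s
  have hsplit : ∀ a, π a * meanInteraction π f ζ (ζ a)
      = π a * meanInteraction π f ξ (ζ a) + π x * (π a * (f (ζ a) s - f (ζ a) (ξ x))) :=
    fun a => by rw [meanInteraction_update]; ring
  have hsymm_sum : ∑ a, π a * (f (ξ a) s - f (ξ a) (ξ x))
      = meanInteraction π f ξ s - meanInteraction π f ξ (ξ x) := by
    simp only [meanInteraction, mul_sub, Finset.sum_sub_distrib]
    congr 1 <;> exact Finset.sum_congr rfl fun a _ => by rw [hfsymm]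
  rw [Ftest_eq_sum_mul_meanInteraction, Ftest_eq_sum_mul_meanInteraction,
    Finset.sum_congr rfl fun a _ => hsplit a, Finset.sum_add_distrib, ← Finset.mul_sum,
    sum_mul_comp_update, sum_mul_comp_update π (fun τ => f τ s - f τ (ξ x)), hsymm_sum,
    hfdiag, hfdiag, hfsymm (ξ x) s]
  ring

omit [DecidableEq E] in
theorem meanInteraction_nonneg {π f} (hπ : ∀ x, 0 ≤ π x) (hfnonneg : ∀ σ τ, 0 ≤ f σ τ) (τ : S) :
    0 ≤ meanInteraction π f ξ τ :=
  Finset.sum_nonneg fun b _ => mul_nonneg (hπ b) (hfnonneg _ _)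

theorem LVM_Ftest_nonpos {q : E → E → ℝ} {π f} (hq0 : ∀ x y, 0 ≤ q x y)
    (hq1 : ∀ x, ∑ y, q x y = 1) (hπstat : ∀ y, ∑ x, π x * q x y = π y)
    (hfsymm : ∀ σ τ, f σ τ = f τ σ) (hfnonneg : ∀ σ τ, 0 ≤ f σ τ) (hfdiag : ∀ σ, f σ σ = 0) :
    LVM q (Ftest π f) ξ ≤ 0 := by
  set Φ := meanInteraction π f ξ
  have hterm : ∀ x y, q x y * (Ftest π f (Function.update ξ x (ξ y)) - Ftest π f ξ)
      ≤ 2 * (π x * q x y * (Φ (ξ y) - Φ (ξ x))) := fun x y => by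
    rw [Ftest_update_sub π ξ hfsymm hfdiag]
    nlinarith [mul_nonneg (hq0 x y) (mul_nonneg (sq_nonneg (π x)) (hfnonneg (ξ y) (ξ x)))]
  calc LVM q (Ftest π f) ξ
      ≤ ∑ x, ∑ y, 2 * (π x * q x y * (Φ (ξ y) - Φ (ξ x))) :=
        Finset.sum_le_sum fun x _ => Finset.sum_le_sum fun y _ => hterm x y
    _ = 0 := by
      simp only [← Finset.mul_sum, sum_sum_mul_sub_eq_zero_of_stationary hq1 hπstat, mul_zero]

end Ftest

section Mutation

variable {S : Type*} [MeasurableSpace S] (μ : Measure S) [IsFiniteMeasure μ] {f : S → S → ℝ}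

theorem integrable_apply_left (hfmeas : Measurable (fun p : S × S => f p.1 p.2))
    (hfbdd : ∃ C : ℝ, ∀ σ τ : S, |f σ τ| ≤ C) (τ : S) :
    Integrable (fun σ => f σ τ) μ := by
  obtain ⟨C, hC⟩ := hfbdd
  exact .of_bound (hfmeas.comp (measurable_id.prodMk measurable_const)).aestronglyMeasurable C
    (.of_forall fun σ => hC σ τ)

variable {E : Type*} [Fintype E] {π : E → ℝ} (ξ : E → S)

theorem integrable_meanInteraction (hfmeas : Measurable (fun p : S × S => f p.1 p.2))
    (hfbdd : ∃ C : ℝ, ∀ σ τ : S, |f σ τ| ≤ C) :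
    Integrable (meanInteraction π f ξ) μ := by
  unfold meanInteraction
  exact integrable_finsetSum _ fun b _ => (integrable_apply_left μ hfmeas hfbdd (ξ b)).const_mul _

theorem integral_meanInteraction (hfmeas : Measurable (fun p : S × S => f p.1 p.2))
    (hfbdd : ∃ C : ℝ, ∀ σ τ : S, |f σ τ| ≤ C) :
    ∫ σ, meanInteraction π f ξ σ ∂μ = ∑ b, π b * ∫ σ, f σ (ξ b) ∂μ := by
  unfold meanInteraction
  rw [integral_finsetSum _ fun b _ => (integrable_apply_left μ hfmeas hfbdd (ξ b)).const_mul _]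
  simp only [integral_const_mul]

theorem Lmu_Ftest_le [DecidableEq E] (hπ : ∀ x, 0 ≤ π x) (hπ1 : ∑ x, π x = 1)
    (hfmeas : Measurable (fun p : S × S => f p.1 p.2))
    (hfbdd : ∃ C : ℝ, ∀ σ τ : S, |f σ τ| ≤ C)
    (hfsymm : ∀ σ τ, f σ τ = f τ σ) (hfnonneg : ∀ σ τ, 0 ≤ f σ τ) (hfdiag : ∀ σ, f σ σ = 0) :
    Lmu μ (Ftest π f) ξ ≤ 2 * ∑ x, π x * ∫ σ, f σ (ξ x) ∂μ := by
  set Φ := meanInteraction π f ξ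
  have hΦ : Integrable Φ μ := integrable_meanInteraction μ ξ hfmeas hfbdd
  have hsite : ∀ x, ∫ σ, (Ftest π f (Function.update ξ x σ) - Ftest π f ξ) ∂μ
      ≤ 2 * π x * ∫ σ, Φ σ ∂μ := fun x => by
    simp only [Ftest_update_sub π ξ hfsymm hfdiag, ← integral_const_mul]
    refine integral_mono (((hΦ.sub (integrable_const _)).const_mul _).sub
      ((integrable_apply_left μ hfmeas hfbdd (ξ x)).const_mul _)) (hΦ.const_mul _) fun σ => ?_
    have := meanInteraction_nonneg ξ hπ hfnonneg (ξ x)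
    nlinarith [hπ x, mul_nonneg (sq_nonneg (π x)) (hfnonneg σ (ξ x))]
  calc Lmu μ (Ftest π f) ξ ≤ ∑ x, 2 * π x * ∫ σ, Φ σ ∂μ := Finset.sum_le_sum fun x _ => hsite x
    _ = 2 * ∑ x, π x * ∫ σ, f σ (ξ x) ∂μ := by
      rw [← Finset.sum_mul, ← Finset.mul_sum, hπ1, mul_one,
        integral_meanInteraction μ ξ hfmeas hfbdd]

end Mutation

theorem full_generator_on_Ff_upper_bound_general
    {E S : Type*} [Fintype E] [DecidableEq E]
    [MeasurableSpace S]
    (q : E → E → ℝ) (π : E → ℝ) (μ : Measure S) [IsFiniteMeasure μ]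
    (hq0 : ∀ x y, 0 ≤ q x y) (hq1 : ∀ x, ∑ y, q x y = 1)
    (hπpos : ∀ x, 0 < π x) (hπ1 : ∑ x, π x = 1)
    (hπstat : ∀ y, ∑ x, π x * q x y = π y)
    (f : S → S → ℝ)
    (hfmeas : Measurable (fun p : S × S => f p.1 p.2))
    (hfbdd : ∃ Cb : ℝ, ∀ σ τ : S, |f σ τ| ≤ Cb)
    (hfsymm : ∀ σ τ, f σ τ = f τ σ)
    (hfnonneg : ∀ σ τ, 0 ≤ f σ τ)
    (hfdiag : ∀ σ, f σ σ = 0)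
    (ξ : E → S) :
    LVM q (Ftest π f) ξ + Lmu μ (Ftest π f) ξ ≤
      2 * ∑ x : E, π x * ∫ σ, f σ (ξ x) ∂μ := by
  have hvoter := LVM_Ftest_nonpos ξ hq0 hq1 hπstat hfsymm hfnonneg hfdiag
  have hmutation :=
    Lmu_Ftest_le μ ξ (fun x => (hπpos x).le) hπ1 hfmeas hfbdd hfsymm hfnonneg hfdiag
  linarith

/-- The bound used in the proof of Theorem 5.1: for `f` bounded measurable, symmetric,
nonnegative and vanishing on the diagonal,
`L^μ_VM F_f(ξ) ≤ 2 ∑_{x∈E} π(x) ∫_S f(σ, ξ(x)) dμ(σ)`. -/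
theorem full_generator_on_Ff_upper_bound
    {E S : Type*} [Fintype E] [DecidableEq E]
    [MetricSpace S] [CompactSpace S] [MeasurableSpace S] [BorelSpace S]
    (hE : 2 ≤ Fintype.card E)
    (q : E → E → ℝ) (π : E → ℝ) (μ : Measure S) [IsFiniteMeasure μ]
    (hq0 : ∀ x y, 0 ≤ q x y) (hq1 : ∀ x, ∑ y, q x y = 1)
    (hqdiag : ∀ x, q x x = 0)
    (hirr : ∀ x y : E, ∃ n : ℕ, 0 < ((Matrix.of q) ^ n) x y)
    (hπpos : ∀ x, 0 < π x) (hπ1 : ∑ x, π x = 1)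
    (hπstat : ∀ y, ∑ x, π x * q x y = π y)
    (f : S → S → ℝ)
    (hfmeas : Measurable (fun p : S × S => f p.1 p.2))
    (hfbdd : ∃ Cb : ℝ, ∀ σ τ : S, |f σ τ| ≤ Cb)
    (hfsymm : ∀ σ τ, f σ τ = f τ σ)
    (hfnonneg : ∀ σ τ, 0 ≤ f σ τ)
    (hfdiag : ∀ σ, f σ σ = 0)
    (ξ : E → S) :
    LVM q (Ftest π f) ξ + Lmu μ (Ftest π f) ξ ≤
      2 * ∑ x : E, π x * ∫ σ, f σ (ξ x) ∂μ :=
  full_generator_on_Ff_upper_bound_general q π μ hq0 hq1 hπpos hπ1 hπstat f hfmeas hfbdd hfsymm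
    hfnonneg hfdiag ξ
end
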